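/- arXiv:2501.08719 — 3 statements merged into one kernel-verified Lean document; each statement's English description precedes it below -/
import Mathlib

section
/- Let f : ℝⁿ → ℝ be convex and continuous, let Ω = {x : l ≤ x ≤ u} with lᵢ ≤ 0 ≤ uᵢ and lᵢ < uᵢ, and let λ₁, λ₂ > 0. Then x* ∈ Ω is a local minimizer of F(x) = f(x) + λ₁‖x₊‖₀ + λ₂‖x₋‖₀ over Ω if and only if x* is a global minimizer of f over the set Ω_{Γᶜ(x*)} = {x ∈ Ω : xᵢ = 0 for all i with xᵢ* = 0}. -/
lemma coord_dist_le' (n : ℕ) (x y : EuclideanSpace ℝ (Fin n)) (i : Fin n) :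
    |x i - y i| ≤ dist x y := by
  rw [EuclideanSpace.dist_eq, ← Real.sqrt_sq_eq_abs]
  apply Real.sqrt_le_sqrt
  calc (x i - y i)^2 = dist (x i) (y i) ^ 2 := by rw [Real.dist_eq, sq_abs]
    _ ≤ ∑ j, dist (x j) (y j) ^ 2 :=
      Finset.single_le_sum (f := fun j => dist (x j) (y j) ^ 2) (fun j _ => sq_nonneg _) (Finset.mem_univ i)

lemma exists_m' (n : ℕ) (xstar : Fin n → ℝ) :
    ∃ m > 0, ∀ i, xstar i ≠ 0 → m ≤ |xstar i| := by
  by_cases h : (Finset.univ.filter (fun i => xstar i ≠ 0)).Nonempty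
  · refine ⟨(Finset.univ.filter (fun i => xstar i ≠ 0)).inf' h (fun i => |xstar i|), ?_, ?_⟩
    · rw [gt_iff_lt, Finset.lt_inf'_iff]
      intro i hi
      simp only [Finset.mem_filter] at hi
      exact abs_pos.mpr hi.2
    · intro i hi
      exact Finset.inf'_le _ (by simp [hi])
  · exact ⟨1, one_pos, fun i hi => absurd ⟨i, by simp [hi]⟩ h⟩

theorem local_min_charac_pos (n : ℕ) (f : EuclideanSpace ℝ (Fin n) → ℝ)
    (hf : ConvexOn ℝ Set.univ f) (hfc : Continuous f)
    (l u : Fin n → ℝ) (hl : ∀ i, l i ≤ 0) (hu : ∀ i, 0 ≤ u i) (hlu : ∀ i, l i < u i)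
    (lam1 lam2 : ℝ) (hlam1 : 0 < lam1) (hlam2 : 0 < lam2)
    (Ω : Set (EuclideanSpace ℝ (Fin n)))
    (hΩ : Ω = {x | ∀ i, l i ≤ x i ∧ x i ≤ u i})
    (F : EuclideanSpace ℝ (Fin n) → ℝ)
    (hF : F = fun x => f x + lam1 * (Finset.univ.filter (fun i => 0 < x i)).card
        + lam2 * (Finset.univ.filter (fun i => x i < 0)).card)
    (xstar : EuclideanSpace ℝ (Fin n)) (hx : xstar ∈ Ω) :
    (∃ δ > (0 : ℝ), ∀ x ∈ Ω ∩ Metric.closedBall xstar δ, F xstar ≤ F x) ↔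
    (∀ x ∈ Ω, (∀ i, xstar i = 0 → x i = 0) → f xstar ≤ f x) := by
  obtain ⟨m, hm, hmle⟩ := exists_m' n xstar
  constructor
  · rintro ⟨δ, hδ, hmin⟩ x hxΩ hsupp
    by_cases hD0 : dist x xstar = 0
    · rw [dist_eq_zero] at hD0
      rw [hD0]
    set D := dist x xstar with hDdef
    have hD : 0 < D := lt_of_le_of_ne dist_nonneg (Ne.symm hD0)
    set t : ℝ := min 1 (min (δ / D) (m / (2 * D))) with htdef
    have ht0 : 0 < t := by
      apply lt_min one_pos
      exact lt_min (div_pos hδ hD) (div_pos hm (by linarith))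
    have ht1 : t ≤ 1 := min_le_left _ _
    have htD : t * D ≤ δ := by
      have : t ≤ δ / D := le_trans (min_le_right _ _) (min_le_left _ _)
      calc t * D ≤ (δ / D) * D := by nlinarith
        _ = δ := by field_simp
    have htm : t * D < m := by
      have : t ≤ m / (2 * D) := le_trans (min_le_right _ _) (min_le_right _ _)
      calc t * D ≤ (m / (2 * D)) * D := by nlinarith
        _ = m / 2 := by field_simp
        _ < m := by linarith
    set y : EuclideanSpace ℝ (Fin n) := xstar + t • (x - xstar) with hydef
    have hyc : ∀ i, y i = xstar i + t * (x i - xstar i) := by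
      intro i
      simp [hydef]
    have hcoord : ∀ i, |x i - xstar i| ≤ D := fun i => coord_dist_le' n x xstar i
    have key : ∀ i, xstar i ≠ 0 → |t * (x i - xstar i)| < |xstar i| := by
      intro i hi
      have h1 : |t * (x i - xstar i)| = t * |x i - xstar i| := by
        rw [abs_mul, abs_of_pos ht0]
      have := hcoord i
      have := hmle i hi
      nlinarith
    have hyΩ : y ∈ Ω := by
      rw [hΩ]; rw [hΩ] at hxΩ hx
      intro i
      obtain ⟨hx1, hx2⟩ := hxΩ i
      obtain ⟨hs1, hs2⟩ := hx i
      rw [hyc i]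
      constructor <;> nlinarith
    have hfilter1 : (Finset.univ.filter (fun i => 0 < y i)) =
        (Finset.univ.filter (fun i => 0 < xstar i)) := by
      ext i
      simp only [Finset.mem_filter, Finset.mem_univ, true_and]
      rw [hyc i]
      rcases lt_trichotomy (xstar i) 0 with h | h | h
      · have := key i (ne_of_lt h)
        constructor
        · intro hy; exfalso
          rw [abs_of_neg h] at this
          cases abs_lt.mp this; linarith
        · intro hy; linarith
      · rw [h, hsupp i h]; simp
      · have := key i (ne_of_gt h)
        rw [abs_of_pos h] at this
        have := (abs_lt.mp this).1
        constructor
        · intro _; exact h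
        · intro _; linarith
    have hfilter2 : (Finset.univ.filter (fun i => y i < 0)) =
        (Finset.univ.filter (fun i => xstar i < 0)) := by
      ext i
      simp only [Finset.mem_filter, Finset.mem_univ, true_and]
      rw [hyc i]
      rcases lt_trichotomy (xstar i) 0 with h | h | h
      · have := key i (ne_of_lt h)
        rw [abs_of_neg h] at this
        have := (abs_lt.mp this).2
        constructor
        · intro _; exact h
        · intro _; linarith
      · rw [h, hsupp i h]; simp
      · have := key i (ne_of_gt h)
        rw [abs_of_pos h] at this
        cases abs_lt.mp this
        constructor
        · intro hy; linarith
        · intro hy; linarith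
    have hyball : y ∈ Metric.closedBall xstar δ := by
      rw [Metric.mem_closedBall]
      have : dist y xstar = t * D := by
        rw [hydef, dist_eq_norm]
        have h1 : xstar + t • (x - xstar) - xstar = t • (x - xstar) := by abel
        rw [h1, norm_smul, Real.norm_eq_abs, abs_of_pos ht0, hDdef, dist_eq_norm]
      rw [this]; exact htD
    have hFle := hmin y ⟨hyΩ, hyball⟩
    rw [hF] at hFle
    simp only [hfilter1, hfilter2] at hFle
    have hfxy : f xstar ≤ f y := by linarith
    have hconv : f y ≤ (1 - t) * f xstar + t * f x := by
      have hy2 : y = (1 - t) • xstar + t • x := by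
        rw [hydef]
        module
      rw [hy2]
      exact hf.2 (Set.mem_univ xstar) (Set.mem_univ x) (by linarith) (le_of_lt ht0) (by ring)
    nlinarith
  · intro hglob
    set c := min lam1 lam2 with hcdef
    have hc : 0 < c := lt_min hlam1 hlam2
    obtain ⟨δ₀, hδ₀, hcont⟩ := Metric.continuous_iff.mp hfc xstar c hc
    set δ : ℝ := min (δ₀ / 2) (m / 2) with hδdef
    have hδ : 0 < δ := lt_min (by linarith) (by linarith)
    refine ⟨δ, hδ, ?_⟩
    rintro x ⟨hxΩ, hxball⟩
    rw [Metric.mem_closedBall] at hxball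
    have hcoord : ∀ i, |x i - xstar i| ≤ δ := fun i =>
      le_trans (coord_dist_le' n x xstar i) hxball
    have hsign : ∀ i, xstar i ≠ 0 → |x i - xstar i| < |xstar i| := by
      intro i hi
      have h1 := hcoord i
      have h2 := hmle i hi
      have h3 : δ ≤ m / 2 := min_le_right _ _
      linarith
    have hsub1 : (Finset.univ.filter (fun i => 0 < xstar i)) ⊆
        (Finset.univ.filter (fun i => 0 < x i)) := by
      intro i hi
      simp only [Finset.mem_filter, Finset.mem_univ, true_and] at *
      have := hsign i (ne_of_gt hi)
      rw [abs_of_pos hi] at this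
      have := (abs_lt.mp this).1
      linarith
    have hsub2 : (Finset.univ.filter (fun i => xstar i < 0)) ⊆
        (Finset.univ.filter (fun i => x i < 0)) := by
      intro i hi
      simp only [Finset.mem_filter, Finset.mem_univ, true_and] at *
      have := hsign i (ne_of_lt hi)
      rw [abs_of_neg hi] at this
      have := (abs_lt.mp this).2
      linarith
    have hcard1 : ((Finset.univ.filter (fun i => 0 < xstar i)).card : ℝ) ≤
        ((Finset.univ.filter (fun i => 0 < x i)).card : ℝ) :=
      Nat.cast_le.mpr (Finset.card_le_card hsub1)
    have hcard2 : ((Finset.univ.filter (fun i => xstar i < 0)).card : ℝ) ≤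
        ((Finset.univ.filter (fun i => x i < 0)).card : ℝ) :=
      Nat.cast_le.mpr (Finset.card_le_card hsub2)
    rw [hF]
    simp only
    by_cases hzero : ∀ i, xstar i = 0 → x i = 0
    · have := hglob x hxΩ hzero
      nlinarith
    · push_neg at hzero
      obtain ⟨i, hi0, hine⟩ := hzero
      have hfx : |f x - f xstar| < c := by
        have := hcont x (lt_of_le_of_lt hxball (by rw [hδdef]; exact lt_of_le_of_lt (min_le_left _ _) (by linarith)))
        rwa [Real.dist_eq] at this
      have hfx' : f xstar - c ≤ f x := by
        cases abs_lt.mp hfx; linarith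
      rcases lt_trichotomy (x i) 0 with h | h | h
      · -- i ∈ N \ N*
        have hcard2' : ((Finset.univ.filter (fun i => xstar i < 0)).card : ℝ) + 1 ≤
            ((Finset.univ.filter (fun i => x i < 0)).card : ℝ) := by
          have hss : (Finset.univ.filter (fun i => xstar i < 0)) ⊂
              (Finset.univ.filter (fun i => x i < 0)) := by
            refine ⟨hsub2, fun hcon => ?_⟩
            have := hcon (Finset.mem_filter.mpr ⟨Finset.mem_univ i, h⟩)
            rw [Finset.mem_filter] at this
            have := this.2
            rw [hi0] at this; exact lt_irrefl 0 this
          have := Finset.card_lt_card hss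
          exact_mod_cast this
        have hc2 : c ≤ lam2 := min_le_right _ _
        nlinarith
      · exact absurd h hine
      · have hcard1' : ((Finset.univ.filter (fun i => 0 < xstar i)).card : ℝ) + 1 ≤
            ((Finset.univ.filter (fun i => 0 < x i)).card : ℝ) := by
          have hss : (Finset.univ.filter (fun i => 0 < xstar i)) ⊂
              (Finset.univ.filter (fun i => 0 < x i)) := by
            refine ⟨hsub1, fun hcon => ?_⟩
            have := hcon (Finset.mem_filter.mpr ⟨Finset.mem_univ i, h⟩)
            rw [Finset.mem_filter] at this
            have := this.2
            rw [hi0] at this; exact lt_irrefl 0 this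
          have := Finset.card_lt_card hss
          exact_mod_cast this
        have hc1 : c ≤ lam1 := min_le_left _ _
        nlinarith
end

section
/- Let {E_k} be nonnegative reals, {x^k} a sequence in ℝⁿ, ζ > 0, and {e^k} a sequence in ℝⁿ with ∑ ‖e^k‖² < ∞. If for all k, ζ‖x^{k+1} − x^k‖² ≤ ‖x^{k+1} − x^k‖·‖e^k‖ + E_k − E_{k+1}, then ∑_{k=0}^∞ ‖x^{k+1} − x^k‖² < ∞. -/
theorem square_summable_error (n : ℕ) (E : ℕ → ℝ) (hE : ∀ k, 0 ≤ E k)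
    (x : ℕ → EuclideanSpace ℝ (Fin n)) (ζ : ℝ) (hζ : 0 < ζ)
    (e : ℕ → EuclideanSpace ℝ (Fin n)) (he : Summable (fun k => ‖e k‖^2))
    (hrec : ∀ k, ζ * ‖x (k+1) - x k‖^2 ≤ ‖x (k+1) - x k‖ * ‖e k‖ + E k - E (k+1)) :
    Summable (fun k => ‖x (k+1) - x k‖^2) := by
  set a : ℕ → ℝ := fun k => ‖x (k+1) - x k‖ with ha
  have key : ∀ k, (ζ/2) * a k ^ 2 ≤ (1/(2*ζ)) * ‖e k‖^2 + (E k - E (k+1)) := by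
    intro k
    have h := hrec k
    have h2 : a k * ‖e k‖ ≤ (ζ/2) * a k ^ 2 + (1/(2*ζ)) * ‖e k‖^2 := by
      rw [← sub_nonneg]
      have heq : ζ/2 * a k ^ 2 + 1/(2*ζ) * ‖e k‖^2 - a k * ‖e k‖
          = (ζ * a k - ‖e k‖)^2 / (2*ζ) := by
        field_simp
        ring
      rw [heq]
      positivity
    nlinarith
  refine summable_of_sum_range_le (c := (2/ζ) * ((1/(2*ζ)) * (∑' (k : ℕ), ‖e k‖^2) + E 0))
    (fun k => sq_nonneg _) fun N => ?_
  have h1 : ∑ k ∈ Finset.range N, (ζ/2) * a k ^ 2 ≤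
      (1/(2*ζ)) * (∑ k ∈ Finset.range N, ‖e k‖^2) + (E 0 - E N) := by
    calc ∑ k ∈ Finset.range N, (ζ/2) * a k ^ 2
        ≤ ∑ k ∈ Finset.range N, ((1/(2*ζ)) * ‖e k‖^2 + (E k - E (k+1))) :=
          Finset.sum_le_sum (fun k _ => key k)
      _ = (1/(2*ζ)) * (∑ k ∈ Finset.range N, ‖e k‖^2) + (E 0 - E N) := by
          rw [Finset.sum_add_distrib, ← Finset.mul_sum, Finset.sum_range_sub']
  have h2 : ∑ k ∈ Finset.range N, ‖e k‖^2 ≤ ∑' k, ‖e k‖^2 :=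
    Summable.sum_le_tsum _ (fun i _ => sq_nonneg _) he
  have h3 : (ζ/2) * ∑ k ∈ Finset.range N, a k ^ 2 ≤
      (1/(2*ζ)) * (∑' k, ‖e k‖^2) + E 0 := by
    rw [Finset.mul_sum]
    have := hE N
    have h4 : (1/(2*ζ)) * (∑ k ∈ Finset.range N, ‖e k‖^2) ≤
        (1/(2*ζ)) * (∑' k, ‖e k‖^2) := by
      apply mul_le_mul_of_nonneg_left h2 (by positivity)
    linarith
  have hζ2 : 0 < ζ/2 := by linarith
  calc ∑ k ∈ Finset.range N, a k ^ 2
      = (2/ζ) * ((ζ/2) * ∑ k ∈ Finset.range N, a k ^ 2) := by field_simp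
    _ ≤ (2/ζ) * ((1/(2*ζ)) * (∑' k, ‖e k‖^2) + E 0) :=
        mul_le_mul_of_nonneg_left h3 (by positivity)
end

section
/- Let {E_k} be nonnegative reals, {x^k} a sequence in ℝⁿ, ε > 0, and {e^k} a sequence in ℝⁿ with e^k → 0. If for all k, (ε − ‖e^k‖)‖x^{k+1} − x^k‖ + E_{k+1} − E_k ≤ 0, then ∑_{k=0}^∞ ‖x^{k+1} − x^k‖ < ∞ and {x^k} converges. -/
theorem finite_length_error (n : ℕ) (E : ℕ → ℝ) (hE : ∀ k, 0 ≤ E k)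
    (x : ℕ → EuclideanSpace ℝ (Fin n)) (ε : ℝ) (hε : 0 < ε)
    (e : ℕ → EuclideanSpace ℝ (Fin n))
    (he : Filter.Tendsto e Filter.atTop (nhds 0))
    (hrec : ∀ k, (ε - ‖e k‖) * ‖x (k+1) - x k‖ + E (k+1) - E k ≤ 0) :
    Summable (fun k => ‖x (k+1) - x k‖) ∧
    ∃ xinf, Filter.Tendsto x Filter.atTop (nhds xinf) := by
  have hen : Filter.Tendsto (fun k => ‖e k‖) Filter.atTop (nhds 0) := by
    simpa using he.norm
  obtain ⟨N, hN⟩ := (Filter.eventually_atTop).mp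
    (hen.eventually (eventually_lt_nhds (half_pos hε)))
  -- key bound for k ≥ N
  have key : ∀ k, (ε / 2) * ‖x (N + k + 1) - x (N + k)‖ ≤ E (N + k) - E (N + k + 1) := by
    intro k
    have h1 := hrec (N + k)
    have h2 : ε / 2 ≤ ε - ‖e (N + k)‖ := by
      have := hN (N + k) (Nat.le_add_right _ _)
      linarith
    have h3 : (ε / 2) * ‖x (N + k + 1) - x (N + k)‖ ≤
        (ε - ‖e (N + k)‖) * ‖x (N + k + 1) - x (N + k)‖ :=
      mul_le_mul_of_nonneg_right h2 (norm_nonneg _)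
    linarith
  have hsum : Summable (fun k => ‖x (N + k + 1) - x (N + k)‖) := by
    apply summable_of_sum_range_le (c := (2 / ε) * E N)
    · intro k; exact norm_nonneg _
    · intro m
      have hsum2 : ∑ i ∈ Finset.range m, (ε / 2) * ‖x (N + i + 1) - x (N + i)‖ ≤
          E N - E (N + m) := by
        have := Finset.sum_le_sum (fun i (_ : i ∈ Finset.range m) => key i)
        calc ∑ i ∈ Finset.range m, (ε / 2) * ‖x (N + i + 1) - x (N + i)‖
            ≤ ∑ i ∈ Finset.range m, (E (N + i) - E (N + i + 1)) := this
          _ = E N - E (N + m) := by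
              have := Finset.sum_range_sub' (fun i => E (N + i)) m
              simpa [Nat.add_assoc] using this
      have hEm := hE (N + m)
      have hfac : ∑ i ∈ Finset.range m, (ε / 2) * ‖x (N + i + 1) - x (N + i)‖ =
          (ε / 2) * ∑ i ∈ Finset.range m, ‖x (N + i + 1) - x (N + i)‖ := by
        rw [Finset.mul_sum]
      rw [hfac] at hsum2
      have hε2 : (0:ℝ) < ε / 2 := half_pos hε
      have : ∑ i ∈ Finset.range m, ‖x (N + i + 1) - x (N + i)‖ ≤ (E N - E (N + m)) / (ε / 2) :=
        (le_div_iff₀' hε2).mpr hsum2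
      calc ∑ i ∈ Finset.range m, ‖x (N + i + 1) - x (N + i)‖
          ≤ (E N - E (N + m)) / (ε / 2) := this
        _ ≤ E N / (ε / 2) := by gcongr; linarith
        _ = (2 / ε) * E N := by field_simp
  have hsum' : Summable (fun k => ‖x (k + 1) - x k‖) := by
    rw [← summable_nat_add_iff N]
    convert hsum using 2 with k
    · rfl
    ring_nf
  refine ⟨hsum', ?_⟩
  have hvec : Summable (fun k => x (k + 1) - x k) := hsum'.of_norm
  obtain ⟨S, hS⟩ := hvec
  have hpart := hS.tendsto_sum_nat
  have heq : ∀ m, ∑ i ∈ Finset.range m, (x (i + 1) - x i) = x m - x 0 :=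
    fun m => Finset.sum_range_sub x m
  refine ⟨S + x 0, ?_⟩
  have : Filter.Tendsto (fun m => x m - x 0) Filter.atTop (nhds S) := by
    simpa [heq] using hpart
  have := this.add_const (x 0)
  simpa using this
end
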